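/- arXiv:1807.05710 — 2 statements merged into one kernel-verified Lean document; each statement's English description precedes it below -/
import Mathlib

section
/- For all real r > 0, 4 sinh⁴ r + 2r⁴ cosh² r + r⁴ − 3r cosh r sinh³ r − 3r² sinh² r − r³ sinh r cosh r ≤ 0. -/
lemma exp_lb9 {x : ℝ} (h0 : 0 ≤ x) (h1 : x ≤ 1) :
    1 + x + x^2/2 + x^3/6 + x^4/24 + x^5/120 + x^6/720 + x^7/5040 + x^8/40320
      - x^9/326592 ≤ Real.exp x := by
  have h := Real.exp_bound (x := x) (by rwa [abs_of_nonneg h0]) (n := 9) (by norm_num)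
  rw [abs_of_nonneg h0, abs_le] at h
  simp [Finset.sum_range_succ, Nat.factorial] at h
  obtain ⟨h1', h2'⟩ := h
  norm_num at h1' h2' ⊢
  linarith

lemma exp_ub9 {x : ℝ} (h0 : 0 ≤ x) (h1 : x ≤ 1) :
    Real.exp x ≤ 1 + x + x^2/2 + x^3/6 + x^4/24 + x^5/120 + x^6/720 + x^7/5040 + x^8/40320
      + x^9/326592 := by
  have h := Real.exp_bound (x := x) (by rwa [abs_of_nonneg h0]) (n := 9) (by norm_num)
  rw [abs_of_nonneg h0, abs_le] at h
  simp [Finset.sum_range_succ, Nat.factorial] at h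
  obtain ⟨h1', h2'⟩ := h
  norm_num at h1' h2' ⊢
  linarith

lemma expneg_lb9 {x : ℝ} (h0 : 0 ≤ x) (h1 : x ≤ 1) :
    1 - x + x^2/2 - x^3/6 + x^4/24 - x^5/120 + x^6/720 - x^7/5040 + x^8/40320
      - x^9/326592 ≤ Real.exp (-x) := by
  have h := Real.exp_bound (x := -x) (by rwa [abs_neg, abs_of_nonneg h0]) (n := 9) (by norm_num)
  rw [abs_neg, abs_of_nonneg h0, abs_le] at h
  simp [Finset.sum_range_succ, Nat.factorial] at h
  obtain ⟨h1', h2'⟩ := h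
  norm_num at h1' h2' ⊢
  linarith

lemma expneg_ub9 {x : ℝ} (h0 : 0 ≤ x) (h1 : x ≤ 1) :
    Real.exp (-x) ≤ 1 - x + x^2/2 - x^3/6 + x^4/24 - x^5/120 + x^6/720 - x^7/5040 + x^8/40320
      + x^9/326592 := by
  have h := Real.exp_bound (x := -x) (by rwa [abs_neg, abs_of_nonneg h0]) (n := 9) (by norm_num)
  rw [abs_neg, abs_of_nonneg h0, abs_le] at h
  simp [Finset.sum_range_succ, Nat.factorial] at h
  obtain ⟨h1', h2'⟩ := h
  norm_num at h1' h2' ⊢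
  linarith

set_option maxHeartbeats 4000000 in
set_option maxRecDepth 100000 in
lemma bigkey (r : ℝ) (h0 : 0 ≤ r) (h3 : r ≤ 3) :
    4 * (((1 + r/3 + (r/3)^2/2 + (r/3)^3/6 + (r/3)^4/24 + (r/3)^5/120 + (r/3)^6/720 + (r/3)^7/5040 + (r/3)^8/40320 + (r/3)^9/326592)^3 - (1 - r/3 + (r/3)^2/2 - (r/3)^3/6 + (r/3)^4/24 - (r/3)^5/120 + (r/3)^6/720 - (r/3)^7/5040 + (r/3)^8/40320 - (r/3)^9/326592)^3)/2)^4 + 2 * r^4 * (((1 + r/3 + (r/3)^2/2 + (r/3)^3/6 + (r/3)^4/24 + (r/3)^5/120 + (r/3)^6/720 + (r/3)^7/5040 + (r/3)^8/40320 + (r/3)^9/326592)^3 + (1 - r/3 + (r/3)^2/2 - (r/3)^3/6 + (r/3)^4/24 - (r/3)^5/120 + (r/3)^6/720 - (r/3)^7/5040 + (r/3)^8/40320 + (r/3)^9/326592)^3)/2)^2 + r^4 - 3 * r * ((((1 + r/3 + (r/3)^2/2 + (r/3)^3/6 + (r/3)^4/24 + (r/3)^5/120 + (r/3)^6/720 +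 (r/3)^7/5040 + (r/3)^8/40320 - (r/3)^9/326592)^3 - (1 - r/3 + (r/3)^2/2 - (r/3)^3/6 + (r/3)^4/24 - (r/3)^5/120 + (r/3)^6/720 - (r/3)^7/5040 + (r/3)^8/40320 + (r/3)^9/326592)^3)/2)^3 * (((1 + r/3 + (r/3)^2/2 + (r/3)^3/6 + (r/3)^4/24 + (r/3)^5/120 + (r/3)^6/720 + (r/3)^7/5040 + (r/3)^8/40320 - (r/3)^9/326592)^3 + (1 - r/3 + (r/3)^2/2 - (r/3)^3/6 + (r/3)^4/24 - (r/3)^5/120 + (r/3)^6/720 - (r/3)^7/5040 + (r/3)^8/40320 - (r/3)^9/326592)^3)/2)) - 3 * r^2 * (((1 + r/3 + (r/3)^2/2 + (r/3)^3/6 + (r/3)^4/24 + (r/3)^5/120 + (r/3)^6/720 + (r/3)^7/5040 + (r/3)^8/40320 - (r/3)^9/326592)^3 - (1 - r/3 + (r/3)^2/2 - (r/3)^3/6 + (r/3)^4/24 - (r/3)^5/120 + (r/3)^6/720 - (r/3)^7/5040 + (r/3)^8/40320 + (r/3)^9/326592)^3)/2)^2 - r^3 * ((((1 + r/3 + (r/3)^2/2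 + (r/3)^3/6 + (r/3)^4/24 + (r/3)^5/120 + (r/3)^6/720 + (r/3)^7/5040 + (r/3)^8/40320 - (r/3)^9/326592)^3 - (1 - r/3 + (r/3)^2/2 - (r/3)^3/6 + (r/3)^4/24 - (r/3)^5/120 + (r/3)^6/720 - (r/3)^7/5040 + (r/3)^8/40320 + (r/3)^9/326592)^3)/2) * (((1 + r/3 + (r/3)^2/2 + (r/3)^3/6 + (r/3)^4/24 + (r/3)^5/120 + (r/3)^6/720 + (r/3)^7/5040 + (r/3)^8/40320 - (r/3)^9/326592)^3 + (1 - r/3 + (r/3)^2/2 - (r/3)^3/6 + (r/3)^4/24 - (r/3)^5/120 + (r/3)^6/720 - (r/3)^7/5040 + (r/3)^8/40320 - (r/3)^9/326592)^3)/2)) ≤ 0 := by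
  have hQ : ((-8/135) - (27871103/1674039150) * r^2 + (1/267846264) * r^3 - (2176771081/964246550400) * r^4 + (7/2754990144) * r^5 - (360200586169/1822425980256000) * r^6 + (671/1041386274432) * r^7 - (2474862204427/196822005867648000) * r^8 + (69329/787288023470592) * r^9 - (591511719567593/956554948516769280000) * r^10 + (981273053/114786593822012313600) * r^11 - (5882198622687473/241051847026225858560000) * r^12 + (270398021/413231737759244328960) * r^13 - (20628656993042471/26033599478832392724480000) * r^14 + (311830577087/7810079843649717817344000) * r^15 - (151611449140387571/7029071859284746035609600000) * r^16 + (818370526471/421744311557084762136576000) * r^17 - (429895276187144049367/860864488750321416473178931200000) * r^18 + (2961423779509/39041473412712989409214464000) * r^19 - (330393528008883714911/33204773137512397492536901632000000) * r^20 + (11262721008312359/4648668239251735648955166228480000) * r^21 - (480556207518530683859/2789200943551041389373099737088000000) * r^22 + (10755153112032731/167352056613062483362385984225280000) * r^23 - (78730529548932074621/30123370190351247005229477160550400000) * r^24 + (21637400139390907/15061685095175623502614738580275200000) * r^25 - (322522354741083615064553/9223173484881744808061161317017321472000000) * r^26 + (1203471620140668719/43919873737532118133624577700082483200000) * r^27 -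 (688898360287685465832379/1660171227278714065451009037063117864960000000) * r^28 + (4489212806468217829/9961027363672284392706054222378707189760000) * r^29 - (1966524383632126368983363/448246231365252797671772440007041823539200000000) * r^30 + (8257370106175103171/1280703518186436564776492685734405210112000000) * r^31 - (1405505518557173573249267/33887415091213111503985996464532361859563520000000) * r^32 + (39122339665508950789/484105929874473021485514235207605169422336000000) * r^33 - (17156829726318149148799163/48797877731346880565739834908926601077771468800000000) * r^34 + (13068194991470000248591/14639363319404064169721950472677980323331440640000000) * r^35 - (952523423006973077838764477/355736528661518759324243396486074921856954007552000000000) * r^36 + (6902073180027479136191/790525619247819465164985325524610937459897794560000000) * r^37 - (100659797157011527209062513/5488506442206289429574040974356584508650147545088000000000) * r^38 + (58311934228158711785857/768390901908880520140365736409921831211020656312320000000) * r^39 - (2735146701864488340988498241/24204313410129736384421520696912537683147150673838080000000000) * r^40 + (121933157311633144671683/207465543515397740437898748830678894426975577204326400000000) * r^41 - (311611104593494931825143/497917304436954577050956997193629346624741385290383360000000) * r^42 + (212393640895670711829151/52281316965880230590350484705331081395597845455490252800000000) * r^43 - (17774186241957802140615772969/5716962010219003215054825502527953750608624400557859143680000000000)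 * r^44 + (955907856894157609056521/38113080068126688100365503350186358337390829337052394291200000000) * r^45 - (99436521529602163001935796153/7203372132875944050969080133185221725766866744702902521036800000000000) * r^46 + (8536357795891638172966819/61743189710365234722592115427301900506573143526024878751744000000000) * r^47 - (22413148251257312551511329/411621264735768231483947436182012670043820956840165858344960000000000) * r^48 + (587370544781739748920353/864404655945113286116289615982226607092024009364348302524416000000000) * r^49 - (539970312174500796288610343/2857827638022619435731406485492259394875671214633151530795008000000000000) * r^50 + (2772133196616192142650859/933557028420722349005592785260804735659385930113496166726369280000000000) * r^51 - (285851357900316529247383997/504120795347190068463020104040834557256068402261287930032239411200000000000) * r^52 + (6433970062946407537873/560134217052433409403355671156482841395631558068097700035821568000000000) * r^53 - (31396022054761474689211755851/22050243588486093594572499350746103534380431914908734059610151845888000000000000) * r^54 + (9571722441368624027801353/245002706538734373273027770563845594826449243498985933995668353843200000000000) * r^55 - (1095707795338665481937417563/396904384592749684702304988313429863618847774468357213072982733225984000000000000) * r^56 + (297548624162050669039783/2572528418656710919366791590920378745677717056739352306954517715353600000000000) * r^57 - (7151380044215835443820377929/2400477718016950093079540569319623815166791339984624424665399570550751232000000000000)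 * r^58 + (287602268081993431547/980010826154937493092111082255382379305796973995943735982673415372800000000000) * r^59 + (2156892559239649641435397499/453690288705203567592033167601408901066523563257094016261760518834091982848000000000000) * r^60 + (3109544434483076943161/5000995245868646027249042852749216281597481958301300884719582438647398400000000000) * r^61 + (1298723025868962199459844519/33074022046609340077459217918142708887749567761442153785482341823005305549619200000000000) * r^62 + (115374889424181546814549/110246740155364466924864059727142362959165225871473845951607806076684351832064000000000) * r^63 + (138409777028129519303614441/992220661398280202323776537544281266632487032843264613564470254690159166488576000000000000) * r^64 + (122146733154992870488721/99222066139828020232377653754428126663248703284326461356447025469015916648857600000000000) * r^65 + (3781375909501478123478997097/10287343817377369137692915141259108172445625556518967513436427600627570238153555968000000000000) * r^66 + (54262595019827910151993/114303820193081879307699057125101201916062506183544083482626973340306335979483955200000000000) * r^67 + (124217741341245372149211293/155544638518745821361916876935837715567377858414566788803158785321488862000881766236160000000000) * r^68 - (34810526032551982706447/18517218871279264447847247254266394710402126001734141524185569681129626428676400742400000000000) * r^69 + (13950367604122004270703269/9332678311124749281715012616150262934042671504874007328189527119289331720052905974169600000000000) * r^70 - (25212514289824649593931/4666339155562374640857506308075131467021335752437003664094763559644665860026452987084800000000000)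 * r^71 + (4538796898348846278205977257/1836951071978684401119965933236856253307619032304350862407544622889719162458013482895802368000000000000) * r^72 - (159866247298156954920703/20410567466429826679110732591520625036751322581159454026750495809885768471755705365508915200000000000) * r^73 + (282040967844405322121246077/77151945023104744847038569195947962638919999356782736221116874161368204823236566281623699456000000000000) * r^74 - (77353275261692004727/12246340479857896007466439554912375022050793548695672416050297485931461083053423219305349120000000000) * r^75 + (2698178598503430946906943/555494004166354162898677698210825331000223995368835700792041493961851074727303277227690636083200000000000) * r^76 - (3844690742748988031/10286926003080632646271809226126395018522666580904364829482249888182427309764875504216493260800000000000) * r^77 + (1732220552460715621451423/299966762249831247965285957033845678740120957499171278427702406739399580352743769702952943484928000000000000) * r^78 + (7807399272650904953/1110988008332708325797355396421650662000447990737671401584082987923702149454606554455381272166400000000000) * r^79 + (24067343610494084034156737/3936163854242285635800482328198122996427867204304125515528310981234401293388703746042148524409225216000000000000) * r^80 + (1576189530551762687947/131205461808076187860016077606604099880928906810137517184277032707813376446290124868071617480307507200000000000) * r^81 + (50846931136452756927043/8856368672045142680551085238445776741962701209684282409938699707777402910124583428594834179920756736000000000000) * r^82 + (289452251511605999/24098962372911952872247850988968099978129799210025258258336597844292252816665533139033562394342195200000000000)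 * r^83 + (36121296555134575474289/7651902532647003275996137646017151105055773845167220002187036547519676114347640082305936731451533819904000000000000) * r^84 + (1694524984857954847/255063417754900109199871254867238370168525794838907333406234551583989203811588002743531224381717793996800000000000) * r^85 + (550141696144273790689/165281094705175270761516573153970463869204715055611952047239989426425004069909025777808233399353130509926400000000000) * r^86 - (111212607093559/787052831929406051245317015018906970805736738360056914510666616316309543190042979894324920949300621475840000000000) * r^87 + (172634586498641069/85001705848375853534494237622041952847019567742886146767151994562161430664524641828587091462524467119390720000000000) * r^88 - (1764520811639/404770027849408826354734464866866442128664608299457841748342831248387765069164961088509959345354605330432000000000) * r^89 + (378350470954831009/347010963955409584469219275668224068302672683353558405562221302600567824544855397801023942186609884568200675328000000000) * r^90 - (27393371264081/3855677377282328716324658618535822981140807592817315617358014473339642494942837753344710468740109828535563059200000000) * r^91 + (10283029256147/23423240066990146951672301107605124610430406126365192375449937925538328156777739351569116097596167208353545584640000000) * r^92 - (1223993761/260258222966557188351914456751168051227004512515168804171665976950425868408641548350767956639957413426150506496000000) * r^93 + (30929287/120462377487377898608600405696254926567927802935592417930885395045625687663428373808069739930494574214389663006720000) * r^94 - (176641/46846480133980293903344602215210249220860812252730384750899875851076656313555478703138232195192334416707091169280000)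 * r^95 + (25601/569184733627860570925636916914804528033458868870674174723433491590581374209699066243129521171586863162991157706752000) * r^96 - (1/903467831155334239564503042721911949259458522016943134481640462842192657475712803560523049478709306607922472550400) * r^97 + (2227/49792280497765242744574717491707100112366981848806576804805961844344058615864474314948970512090418789498466476186664960) * r^98 - (1/1659742683258841424819157249723570003745566061626885893493532061478135287195482477164965683736347292983282215872888832) * r^99) ≤ (0:ℝ) := by
    linarith [pow_nonneg h0 2,
    pow_le_pow_left₀ h0 h3 3,
    pow_nonneg h0 4,
    pow_le_pow_left₀ h0 h3 5,
    pow_nonneg h0 6,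
    pow_le_pow_left₀ h0 h3 7,
    pow_nonneg h0 8,
    pow_le_pow_left₀ h0 h3 9,
    pow_nonneg h0 10,
    pow_le_pow_left₀ h0 h3 11,
    pow_nonneg h0 12,
    pow_le_pow_left₀ h0 h3 13,
    pow_nonneg h0 14,
    pow_le_pow_left₀ h0 h3 15,
    pow_nonneg h0 16,
    pow_le_pow_left₀ h0 h3 17,
    pow_nonneg h0 18,
    pow_le_pow_left₀ h0 h3 19,
    pow_nonneg h0 20,
    pow_le_pow_left₀ h0 h3 21,
    pow_nonneg h0 22,
    pow_le_pow_left₀ h0 h3 23,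
    pow_nonneg h0 24,
    pow_le_pow_left₀ h0 h3 25,
    pow_nonneg h0 26,
    pow_le_pow_left₀ h0 h3 27,
    pow_nonneg h0 28,
    pow_le_pow_left₀ h0 h3 29,
    pow_nonneg h0 30,
    pow_le_pow_left₀ h0 h3 31,
    pow_nonneg h0 32,
    pow_le_pow_left₀ h0 h3 33,
    pow_nonneg h0 34,
    pow_le_pow_left₀ h0 h3 35,
    pow_nonneg h0 36,
    pow_le_pow_left₀ h0 h3 37,
    pow_nonneg h0 38,
    pow_le_pow_left₀ h0 h3 39,
    pow_nonneg h0 40,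
    pow_le_pow_left₀ h0 h3 41,
    pow_nonneg h0 42,
    pow_le_pow_left₀ h0 h3 43,
    pow_nonneg h0 44,
    pow_le_pow_left₀ h0 h3 45,
    pow_nonneg h0 46,
    pow_le_pow_left₀ h0 h3 47,
    pow_nonneg h0 48,
    pow_le_pow_left₀ h0 h3 49,
    pow_nonneg h0 50,
    pow_le_pow_left₀ h0 h3 51,
    pow_nonneg h0 52,
    pow_le_pow_left₀ h0 h3 53,
    pow_nonneg h0 54,
    pow_le_pow_left₀ h0 h3 55,
    pow_nonneg h0 56,
    pow_le_pow_left₀ h0 h3 57,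
    pow_nonneg h0 58,
    pow_le_pow_left₀ h0 h3 59,
    pow_le_pow_left₀ h0 h3 60,
    pow_le_pow_left₀ h0 h3 61,
    pow_le_pow_left₀ h0 h3 62,
    pow_le_pow_left₀ h0 h3 63,
    pow_le_pow_left₀ h0 h3 64,
    pow_le_pow_left₀ h0 h3 65,
    pow_le_pow_left₀ h0 h3 66,
    pow_le_pow_left₀ h0 h3 67,
    pow_le_pow_left₀ h0 h3 68,
    pow_nonneg h0 69,
    pow_le_pow_left₀ h0 h3 70,
    pow_nonneg h0 71,
    pow_le_pow_left₀ h0 h3 72,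
    pow_nonneg h0 73,
    pow_le_pow_left₀ h0 h3 74,
    pow_nonneg h0 75,
    pow_le_pow_left₀ h0 h3 76,
    pow_nonneg h0 77,
    pow_le_pow_left₀ h0 h3 78,
    pow_le_pow_left₀ h0 h3 79,
    pow_le_pow_left₀ h0 h3 80,
    pow_le_pow_left₀ h0 h3 81,
    pow_le_pow_left₀ h0 h3 82,
    pow_le_pow_left₀ h0 h3 83,
    pow_le_pow_left₀ h0 h3 84,
    pow_le_pow_left₀ h0 h3 85,
    pow_le_pow_left₀ h0 h3 86,
    pow_nonneg h0 87,
    pow_le_pow_left₀ h0 h3 88,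
    pow_nonneg h0 89,
    pow_le_pow_left₀ h0 h3 90,
    pow_nonneg h0 91,
    pow_le_pow_left₀ h0 h3 92,
    pow_nonneg h0 93,
    pow_le_pow_left₀ h0 h3 94,
    pow_nonneg h0 95,
    pow_le_pow_left₀ h0 h3 96,
    pow_nonneg h0 97,
    pow_le_pow_left₀ h0 h3 98,
    pow_nonneg h0 99]
  have hid : 4 * (((1 + r/3 + (r/3)^2/2 + (r/3)^3/6 + (r/3)^4/24 + (r/3)^5/120 + (r/3)^6/720 + (r/3)^7/5040 + (r/3)^8/40320 + (r/3)^9/326592)^3 - (1 - r/3 + (r/3)^2/2 - (r/3)^3/6 + (r/3)^4/24 - (r/3)^5/120 + (r/3)^6/720 - (r/3)^7/5040 + (r/3)^8/40320 - (r/3)^9/326592)^3)/2)^4 + 2 * r^4 * (((1 + r/3 + (r/3)^2/2 + (r/3)^3/6 + (r/3)^4/24 + (r/3)^5/120 + (r/3)^6/720 + (r/3)^7/5040 + (r/3)^8/40320 + (r/3)^9/326592)^3 + (1 - r/3 + (r/3)^2/2 - (r/3)^3/6 + (r/3)^4/24 - (r/3)^5/120 + (r/3)^6/720 - (r/3)^7/5040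 + (r/3)^8/40320 + (r/3)^9/326592)^3)/2)^2 + r^4 - 3 * r * ((((1 + r/3 + (r/3)^2/2 + (r/3)^3/6 + (r/3)^4/24 + (r/3)^5/120 + (r/3)^6/720 + (r/3)^7/5040 + (r/3)^8/40320 - (r/3)^9/326592)^3 - (1 - r/3 + (r/3)^2/2 - (r/3)^3/6 + (r/3)^4/24 - (r/3)^5/120 + (r/3)^6/720 - (r/3)^7/5040 + (r/3)^8/40320 + (r/3)^9/326592)^3)/2)^3 * (((1 + r/3 + (r/3)^2/2 + (r/3)^3/6 + (r/3)^4/24 + (r/3)^5/120 + (r/3)^6/720 + (r/3)^7/5040 + (r/3)^8/40320 - (r/3)^9/326592)^3 + (1 - r/3 + (r/3)^2/2 - (r/3)^3/6 + (r/3)^4/24 - (r/3)^5/120 + (r/3)^6/720 - (r/3)^7/5040 + (r/3)^8/40320 - (r/3)^9/326592)^3)/2)) - 3 * r^2 * (((1 + r/3 + (r/3)^2/2 + (r/3)^3/6 + (r/3)^4/24 + (r/3)^5/120 + (r/3)^6/720 + (r/3)^7/5040 + (r/3)^8/40320 - (r/3)^9/326592)^3 - (1 - r/3 + (r/3)^2/2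 - (r/3)^3/6 + (r/3)^4/24 - (r/3)^5/120 + (r/3)^6/720 - (r/3)^7/5040 + (r/3)^8/40320 + (r/3)^9/326592)^3)/2)^2 - r^3 * ((((1 + r/3 + (r/3)^2/2 + (r/3)^3/6 + (r/3)^4/24 + (r/3)^5/120 + (r/3)^6/720 + (r/3)^7/5040 + (r/3)^8/40320 - (r/3)^9/326592)^3 - (1 - r/3 + (r/3)^2/2 - (r/3)^3/6 + (r/3)^4/24 - (r/3)^5/120 + (r/3)^6/720 - (r/3)^7/5040 + (r/3)^8/40320 + (r/3)^9/326592)^3)/2) * (((1 + r/3 + (r/3)^2/2 + (r/3)^3/6 + (r/3)^4/24 + (r/3)^5/120 + (r/3)^6/720 + (r/3)^7/5040 + (r/3)^8/40320 - (r/3)^9/326592)^3 + (1 - r/3 + (r/3)^2/2 - (r/3)^3/6 + (r/3)^4/24 - (r/3)^5/120 + (r/3)^6/720 - (r/3)^7/5040 + (r/3)^8/40320 - (r/3)^9/326592)^3)/2)) = r^10 * ((-8/135) - (27871103/1674039150) * r^2 + (1/267846264) * r^3 - (2176771081/964246550400) * r^4 + (7/2754990144) * r^5 - (360200586169/1822425980256000)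 * r^6 + (671/1041386274432) * r^7 - (2474862204427/196822005867648000) * r^8 + (69329/787288023470592) * r^9 - (591511719567593/956554948516769280000) * r^10 + (981273053/114786593822012313600) * r^11 - (5882198622687473/241051847026225858560000) * r^12 + (270398021/413231737759244328960) * r^13 - (20628656993042471/26033599478832392724480000) * r^14 + (311830577087/7810079843649717817344000) * r^15 - (151611449140387571/7029071859284746035609600000) * r^16 + (818370526471/421744311557084762136576000) * r^17 - (429895276187144049367/860864488750321416473178931200000) * r^18 + (2961423779509/39041473412712989409214464000) * r^19 - (330393528008883714911/33204773137512397492536901632000000) * r^20 + (11262721008312359/4648668239251735648955166228480000) * r^21 - (480556207518530683859/2789200943551041389373099737088000000) * r^22 + (10755153112032731/167352056613062483362385984225280000) * r^23 - (78730529548932074621/30123370190351247005229477160550400000) * r^24 + (21637400139390907/15061685095175623502614738580275200000) * r^25 - (322522354741083615064553/9223173484881744808061161317017321472000000) * r^26 + (1203471620140668719/43919873737532118133624577700082483200000) * r^27 - (688898360287685465832379/1660171227278714065451009037063117864960000000) * r^28 + (4489212806468217829/9961027363672284392706054222378707189760000) * r^29 - (1966524383632126368983363/448246231365252797671772440007041823539200000000)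 * r^30 + (8257370106175103171/1280703518186436564776492685734405210112000000) * r^31 - (1405505518557173573249267/33887415091213111503985996464532361859563520000000) * r^32 + (39122339665508950789/484105929874473021485514235207605169422336000000) * r^33 - (17156829726318149148799163/48797877731346880565739834908926601077771468800000000) * r^34 + (13068194991470000248591/14639363319404064169721950472677980323331440640000000) * r^35 - (952523423006973077838764477/355736528661518759324243396486074921856954007552000000000) * r^36 + (6902073180027479136191/790525619247819465164985325524610937459897794560000000) * r^37 - (100659797157011527209062513/5488506442206289429574040974356584508650147545088000000000) * r^38 + (58311934228158711785857/768390901908880520140365736409921831211020656312320000000) * r^39 - (2735146701864488340988498241/24204313410129736384421520696912537683147150673838080000000000) * r^40 + (121933157311633144671683/207465543515397740437898748830678894426975577204326400000000) * r^41 - (311611104593494931825143/497917304436954577050956997193629346624741385290383360000000) * r^42 + (212393640895670711829151/52281316965880230590350484705331081395597845455490252800000000) * r^43 - (17774186241957802140615772969/5716962010219003215054825502527953750608624400557859143680000000000) * r^44 + (955907856894157609056521/38113080068126688100365503350186358337390829337052394291200000000) * r^45 - (99436521529602163001935796153/7203372132875944050969080133185221725766866744702902521036800000000000) * r^46 + (8536357795891638172966819/61743189710365234722592115427301900506573143526024878751744000000000)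 * r^47 - (22413148251257312551511329/411621264735768231483947436182012670043820956840165858344960000000000) * r^48 + (587370544781739748920353/864404655945113286116289615982226607092024009364348302524416000000000) * r^49 - (539970312174500796288610343/2857827638022619435731406485492259394875671214633151530795008000000000000) * r^50 + (2772133196616192142650859/933557028420722349005592785260804735659385930113496166726369280000000000) * r^51 - (285851357900316529247383997/504120795347190068463020104040834557256068402261287930032239411200000000000) * r^52 + (6433970062946407537873/560134217052433409403355671156482841395631558068097700035821568000000000) * r^53 - (31396022054761474689211755851/22050243588486093594572499350746103534380431914908734059610151845888000000000000) * r^54 + (9571722441368624027801353/245002706538734373273027770563845594826449243498985933995668353843200000000000) * r^55 - (1095707795338665481937417563/396904384592749684702304988313429863618847774468357213072982733225984000000000000) * r^56 + (297548624162050669039783/2572528418656710919366791590920378745677717056739352306954517715353600000000000) * r^57 - (7151380044215835443820377929/2400477718016950093079540569319623815166791339984624424665399570550751232000000000000) * r^58 + (287602268081993431547/980010826154937493092111082255382379305796973995943735982673415372800000000000) * r^59 + (2156892559239649641435397499/453690288705203567592033167601408901066523563257094016261760518834091982848000000000000) * r^60 + (3109544434483076943161/5000995245868646027249042852749216281597481958301300884719582438647398400000000000)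 * r^61 + (1298723025868962199459844519/33074022046609340077459217918142708887749567761442153785482341823005305549619200000000000) * r^62 + (115374889424181546814549/110246740155364466924864059727142362959165225871473845951607806076684351832064000000000) * r^63 + (138409777028129519303614441/992220661398280202323776537544281266632487032843264613564470254690159166488576000000000000) * r^64 + (122146733154992870488721/99222066139828020232377653754428126663248703284326461356447025469015916648857600000000000) * r^65 + (3781375909501478123478997097/10287343817377369137692915141259108172445625556518967513436427600627570238153555968000000000000) * r^66 + (54262595019827910151993/114303820193081879307699057125101201916062506183544083482626973340306335979483955200000000000) * r^67 + (124217741341245372149211293/155544638518745821361916876935837715567377858414566788803158785321488862000881766236160000000000) * r^68 - (34810526032551982706447/18517218871279264447847247254266394710402126001734141524185569681129626428676400742400000000000) * r^69 + (13950367604122004270703269/9332678311124749281715012616150262934042671504874007328189527119289331720052905974169600000000000) * r^70 - (25212514289824649593931/4666339155562374640857506308075131467021335752437003664094763559644665860026452987084800000000000) * r^71 + (4538796898348846278205977257/1836951071978684401119965933236856253307619032304350862407544622889719162458013482895802368000000000000) * r^72 - (159866247298156954920703/20410567466429826679110732591520625036751322581159454026750495809885768471755705365508915200000000000) * r^73 +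 (282040967844405322121246077/77151945023104744847038569195947962638919999356782736221116874161368204823236566281623699456000000000000) * r^74 - (77353275261692004727/12246340479857896007466439554912375022050793548695672416050297485931461083053423219305349120000000000) * r^75 + (2698178598503430946906943/555494004166354162898677698210825331000223995368835700792041493961851074727303277227690636083200000000000) * r^76 - (3844690742748988031/10286926003080632646271809226126395018522666580904364829482249888182427309764875504216493260800000000000) * r^77 + (1732220552460715621451423/299966762249831247965285957033845678740120957499171278427702406739399580352743769702952943484928000000000000) * r^78 + (7807399272650904953/1110988008332708325797355396421650662000447990737671401584082987923702149454606554455381272166400000000000) * r^79 + (24067343610494084034156737/3936163854242285635800482328198122996427867204304125515528310981234401293388703746042148524409225216000000000000) * r^80 + (1576189530551762687947/131205461808076187860016077606604099880928906810137517184277032707813376446290124868071617480307507200000000000) * r^81 + (50846931136452756927043/8856368672045142680551085238445776741962701209684282409938699707777402910124583428594834179920756736000000000000) * r^82 + (289452251511605999/24098962372911952872247850988968099978129799210025258258336597844292252816665533139033562394342195200000000000) * r^83 + (36121296555134575474289/7651902532647003275996137646017151105055773845167220002187036547519676114347640082305936731451533819904000000000000) * r^84 + (1694524984857954847/255063417754900109199871254867238370168525794838907333406234551583989203811588002743531224381717793996800000000000)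 * r^85 + (550141696144273790689/165281094705175270761516573153970463869204715055611952047239989426425004069909025777808233399353130509926400000000000) * r^86 - (111212607093559/787052831929406051245317015018906970805736738360056914510666616316309543190042979894324920949300621475840000000000) * r^87 + (172634586498641069/85001705848375853534494237622041952847019567742886146767151994562161430664524641828587091462524467119390720000000000) * r^88 - (1764520811639/404770027849408826354734464866866442128664608299457841748342831248387765069164961088509959345354605330432000000000) * r^89 + (378350470954831009/347010963955409584469219275668224068302672683353558405562221302600567824544855397801023942186609884568200675328000000000) * r^90 - (27393371264081/3855677377282328716324658618535822981140807592817315617358014473339642494942837753344710468740109828535563059200000000) * r^91 + (10283029256147/23423240066990146951672301107605124610430406126365192375449937925538328156777739351569116097596167208353545584640000000) * r^92 - (1223993761/260258222966557188351914456751168051227004512515168804171665976950425868408641548350767956639957413426150506496000000) * r^93 + (30929287/120462377487377898608600405696254926567927802935592417930885395045625687663428373808069739930494574214389663006720000) * r^94 - (176641/46846480133980293903344602215210249220860812252730384750899875851076656313555478703138232195192334416707091169280000) * r^95 + (25601/569184733627860570925636916914804528033458868870674174723433491590581374209699066243129521171586863162991157706752000) * r^96 - (1/903467831155334239564503042721911949259458522016943134481640462842192657475712803560523049478709306607922472550400)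 * r^97 + (2227/49792280497765242744574717491707100112366981848806576804805961844344058615864474314948970512090418789498466476186664960) * r^98 - (1/1659742683258841424819157249723570003745566061626885893493532061478135287195482477164965683736347292983282215872888832) * r^99) := by ring
  rw [hid]
  exact mul_nonpos_of_nonneg_of_nonpos (pow_nonneg h0 10) hQ


lemma combine (r s c slo shi clo chi : ℝ) (h0 : 0 ≤ r)
    (hs0 : 0 ≤ s) (hc0 : 0 ≤ c) (hslo0 : 0 ≤ slo) (hclo0 : 0 ≤ clo)
    (h1 : slo ≤ s) (h2 : s ≤ shi) (hcl : clo ≤ c) (hch : c ≤ chi)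
    (hkey : 4 * shi^4 + 2 * r^4 * chi^2 + r^4 - 3 * r * (slo^3 * clo)
      - 3 * r^2 * slo^2 - r^3 * (slo * clo) ≤ 0) :
    4 * s ^ 4 + 2 * r ^ 4 * c ^ 2 + r ^ 4 - 3 * r * c * s ^ 3 - 3 * r ^ 2 * s ^ 2
      - r ^ 3 * s * c ≤ 0 := by
  have t1 : s^4 ≤ shi^4 := pow_le_pow_left₀ hs0 h2 4
  have t2 : c^2 ≤ chi^2 := pow_le_pow_left₀ hc0 hch 2
  have t3 : slo^3 * clo ≤ s^3 * c :=
    mul_le_mul (pow_le_pow_left₀ hslo0 h1 3) hcl hclo0 (pow_nonneg hs0 3)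
  have t4 : slo^2 ≤ s^2 := pow_le_pow_left₀ hslo0 h1 2
  have t5 : slo * clo ≤ s * c := mul_le_mul h1 hcl hclo0 hs0
  have u2 : 2 * r^4 * c^2 ≤ 2 * r^4 * chi^2 :=
    mul_le_mul_of_nonneg_left t2 (by positivity)
  have u3 : 3 * r * (slo^3 * clo) ≤ 3 * r * (s^3 * c) :=
    mul_le_mul_of_nonneg_left t3 (by positivity)
  have u4 : 3 * r^2 * slo^2 ≤ 3 * r^2 * s^2 :=
    mul_le_mul_of_nonneg_left t4 (by positivity)
  have u5 : r^3 * (slo * clo) ≤ r^3 * (s * c) :=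
    mul_le_mul_of_nonneg_left t5 (by positivity)
  nlinarith [t1, u2, u3, u4, u5, hkey]

set_option maxHeartbeats 4000000 in
set_option maxRecDepth 100000 in
lemma small_case (r : ℝ) (h0 : 0 < r) (h3 : r ≤ 3) :
    4 * (Real.sinh r) ^ 4 + 2 * r ^ 4 * (Real.cosh r) ^ 2 + r ^ 4
      - 3 * r * Real.cosh r * (Real.sinh r) ^ 3 - 3 * r ^ 2 * (Real.sinh r) ^ 2
      - r ^ 3 * Real.sinh r * Real.cosh r ≤ 0 := by
  have hx0 : (0:ℝ) ≤ r/3 := by linarith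
  have hx1 : r/3 ≤ 1 := by linarith
  have ha := exp_lb9 hx0 hx1
  have ha' := exp_ub9 hx0 hx1
  have hb := expneg_lb9 hx0 hx1
  have hb' := expneg_ub9 hx0 hx1
  have hp2 := pow_nonneg hx0 2
  have hp3 := pow_nonneg hx0 3
  have hp4 := pow_nonneg hx0 4
  have hp5 := pow_nonneg hx0 5
  have hp6 := pow_nonneg hx0 6
  have hp7 := pow_nonneg hx0 7
  have hp8 := pow_nonneg hx0 8
  have hp9 := pow_nonneg hx0 9
  have hq9 : (r/3)^9 ≤ 1 := pow_le_one₀ hx0 hx1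
  have hq93 : (r/3)^9 ≤ r/3 := by simpa using pow_le_pow_of_le_one hx0 hx1 (by norm_num : 1 ≤ 9)
  have hAlo0 : (0:ℝ) ≤ (1 + r/3 + (r/3)^2/2 + (r/3)^3/6 + (r/3)^4/24 + (r/3)^5/120 + (r/3)^6/720 + (r/3)^7/5040 + (r/3)^8/40320 - (r/3)^9/326592) := by linarith
  have hcube : (1:ℝ) - r/3 + (r/3)^2/2 - (r/3)^3/6 ≥ 1/3 := by
    nlinarith [mul_nonneg (by linarith : (0:ℝ) ≤ 1 - r/3) (sq_nonneg (r/3 - 1))]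
  have hd45 : (r/3)^4/24 - (r/3)^5/120 ≥ 0 := by
    nlinarith [mul_nonneg hp4 (by linarith : (0:ℝ) ≤ 1 - r/3)]
  have hd67 : (r/3)^6/720 - (r/3)^7/5040 ≥ 0 := by
    nlinarith [mul_nonneg hp6 (by linarith : (0:ℝ) ≤ 1 - r/3)]
  have hBlo0 : (0:ℝ) ≤ (1 - r/3 + (r/3)^2/2 - (r/3)^3/6 + (r/3)^4/24 - (r/3)^5/120 + (r/3)^6/720 - (r/3)^7/5040 + (r/3)^8/40320 - (r/3)^9/326592) := by linarith
  have hBhi0 : (0:ℝ) ≤ (1 - r/3 + (r/3)^2/2 - (r/3)^3/6 + (r/3)^4/24 - (r/3)^5/120 + (r/3)^6/720 - (r/3)^7/5040 + (r/3)^8/40320 + (r/3)^9/326592) := by linarith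
  have hAB : (1 - r/3 + (r/3)^2/2 - (r/3)^3/6 + (r/3)^4/24 - (r/3)^5/120 + (r/3)^6/720 - (r/3)^7/5040 + (r/3)^8/40320 + (r/3)^9/326592) ≤ (1 + r/3 + (r/3)^2/2 + (r/3)^3/6 + (r/3)^4/24 + (r/3)^5/120 + (r/3)^6/720 + (r/3)^7/5040 + (r/3)^8/40320 - (r/3)^9/326592) := by linarith
  have hexp3 : Real.exp r = Real.exp (r/3) ^ 3 := by
    rw [← Real.exp_nat_mul]; congr 1; push_cast; ring
  have hexpn3 : Real.exp (-r) = Real.exp (-(r/3)) ^ 3 := by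
    rw [← Real.exp_nat_mul]; congr 1; push_cast; ring
  have hElo : (1 + r/3 + (r/3)^2/2 + (r/3)^3/6 + (r/3)^4/24 + (r/3)^5/120 + (r/3)^6/720 + (r/3)^7/5040 + (r/3)^8/40320 - (r/3)^9/326592)^3 ≤ Real.exp r := by
    rw [hexp3]; exact pow_le_pow_left₀ hAlo0 ha 3
  have hEhi : Real.exp r ≤ (1 + r/3 + (r/3)^2/2 + (r/3)^3/6 + (r/3)^4/24 + (r/3)^5/120 + (r/3)^6/720 + (r/3)^7/5040 + (r/3)^8/40320 + (r/3)^9/326592)^3 := by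
    rw [hexp3]; exact pow_le_pow_left₀ (Real.exp_nonneg _) ha' 3
  have hNlo : (1 - r/3 + (r/3)^2/2 - (r/3)^3/6 + (r/3)^4/24 - (r/3)^5/120 + (r/3)^6/720 - (r/3)^7/5040 + (r/3)^8/40320 - (r/3)^9/326592)^3 ≤ Real.exp (-r) := by
    rw [hexpn3]; exact pow_le_pow_left₀ hBlo0 hb 3
  have hNhi : Real.exp (-r) ≤ (1 - r/3 + (r/3)^2/2 - (r/3)^3/6 + (r/3)^4/24 - (r/3)^5/120 + (r/3)^6/720 - (r/3)^7/5040 + (r/3)^8/40320 + (r/3)^9/326592)^3 := by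
    rw [hexpn3]; exact pow_le_pow_left₀ (Real.exp_nonneg _) hb' 3
  have hABc : (1 - r/3 + (r/3)^2/2 - (r/3)^3/6 + (r/3)^4/24 - (r/3)^5/120 + (r/3)^6/720 - (r/3)^7/5040 + (r/3)^8/40320 + (r/3)^9/326592)^3 ≤ (1 + r/3 + (r/3)^2/2 + (r/3)^3/6 + (r/3)^4/24 + (r/3)^5/120 + (r/3)^6/720 + (r/3)^7/5040 + (r/3)^8/40320 - (r/3)^9/326592)^3 := pow_le_pow_left₀ hBhi0 hAB 3
  have hsinh := Real.sinh_eq r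
  have hcosh := Real.cosh_eq r
  have hkey := bigkey r h0.le h3
  have hs_lo : (((1 + r/3 + (r/3)^2/2 + (r/3)^3/6 + (r/3)^4/24 + (r/3)^5/120 + (r/3)^6/720 + (r/3)^7/5040 + (r/3)^8/40320 - (r/3)^9/326592)^3 - (1 - r/3 + (r/3)^2/2 - (r/3)^3/6 + (r/3)^4/24 - (r/3)^5/120 + (r/3)^6/720 - (r/3)^7/5040 + (r/3)^8/40320 + (r/3)^9/326592)^3)/2) ≤ Real.sinh r := by rw [hsinh]; linarith
  have hs_hi : Real.sinh r ≤ (((1 + r/3 + (r/3)^2/2 + (r/3)^3/6 + (r/3)^4/24 + (r/3)^5/120 + (r/3)^6/720 + (r/3)^7/5040 + (r/3)^8/40320 + (r/3)^9/326592)^3 - (1 - r/3 + (r/3)^2/2 - (r/3)^3/6 + (r/3)^4/24 - (r/3)^5/120 + (r/3)^6/720 - (r/3)^7/5040 + (r/3)^8/40320 - (r/3)^9/326592)^3)/2) := by rw [hsinh]; linarith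
  have hc_lo : (((1 + r/3 + (r/3)^2/2 + (r/3)^3/6 + (r/3)^4/24 + (r/3)^5/120 + (r/3)^6/720 + (r/3)^7/5040 + (r/3)^8/40320 - (r/3)^9/326592)^3 + (1 - r/3 + (r/3)^2/2 - (r/3)^3/6 + (r/3)^4/24 - (r/3)^5/120 + (r/3)^6/720 - (r/3)^7/5040 + (r/3)^8/40320 - (r/3)^9/326592)^3)/2) ≤ Real.cosh r := by rw [hcosh]; linarith
  have hc_hi : Real.cosh r ≤ (((1 + r/3 + (r/3)^2/2 + (r/3)^3/6 + (r/3)^4/24 + (r/3)^5/120 + (r/3)^6/720 + (r/3)^7/5040 + (r/3)^8/40320 + (r/3)^9/326592)^3 + (1 - r/3 + (r/3)^2/2 - (r/3)^3/6 + (r/3)^4/24 - (r/3)^5/120 + (r/3)^6/720 - (r/3)^7/5040 + (r/3)^8/40320 + (r/3)^9/326592)^3)/2) := by rw [hcosh]; linarith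
  have hslo0 : (0:ℝ) ≤ (((1 + r/3 + (r/3)^2/2 + (r/3)^3/6 + (r/3)^4/24 + (r/3)^5/120 + (r/3)^6/720 + (r/3)^7/5040 + (r/3)^8/40320 - (r/3)^9/326592)^3 - (1 - r/3 + (r/3)^2/2 - (r/3)^3/6 + (r/3)^4/24 - (r/3)^5/120 + (r/3)^6/720 - (r/3)^7/5040 + (r/3)^8/40320 + (r/3)^9/326592)^3)/2) := by linarith
  have hclo0 : (0:ℝ) ≤ (((1 + r/3 + (r/3)^2/2 + (r/3)^3/6 + (r/3)^4/24 + (r/3)^5/120 + (r/3)^6/720 + (r/3)^7/5040 + (r/3)^8/40320 - (r/3)^9/326592)^3 + (1 - r/3 + (r/3)^2/2 - (r/3)^3/6 + (r/3)^4/24 - (r/3)^5/120 + (r/3)^6/720 - (r/3)^7/5040 + (r/3)^8/40320 - (r/3)^9/326592)^3)/2) := by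
    have h5 := pow_nonneg hAlo0 3
    have h6 := pow_nonneg hBlo0 3
    linarith
  have hs0 : (0:ℝ) ≤ Real.sinh r := by positivity
  have hc0 : (0:ℝ) ≤ Real.cosh r := (Real.cosh_pos r).le
  exact combine r (Real.sinh r) (Real.cosh r) (((1 + r/3 + (r/3)^2/2 + (r/3)^3/6 + (r/3)^4/24 + (r/3)^5/120 + (r/3)^6/720 + (r/3)^7/5040 + (r/3)^8/40320 - (r/3)^9/326592)^3 - (1 - r/3 + (r/3)^2/2 - (r/3)^3/6 + (r/3)^4/24 - (r/3)^5/120 + (r/3)^6/720 - (r/3)^7/5040 + (r/3)^8/40320 + (r/3)^9/326592)^3)/2) (((1 + r/3 + (r/3)^2/2 + (r/3)^3/6 + (r/3)^4/24 + (r/3)^5/120 + (r/3)^6/720 + (r/3)^7/5040 + (r/3)^8/40320 + (r/3)^9/326592)^3 - (1 - r/3 + (r/3)^2/2 - (r/3)^3/6 + (r/3)^4/24 - (r/3)^5/120 + (r/3)^6/720 - (r/3)^7/5040 + (r/3)^8/40320 - (r/3)^9/326592)^3)/2) (((1 + r/3 + (r/3)^2/2 + (r/3)^3/6 + (r/3)^4/24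 + (r/3)^5/120 + (r/3)^6/720 + (r/3)^7/5040 + (r/3)^8/40320 - (r/3)^9/326592)^3 + (1 - r/3 + (r/3)^2/2 - (r/3)^3/6 + (r/3)^4/24 - (r/3)^5/120 + (r/3)^6/720 - (r/3)^7/5040 + (r/3)^8/40320 - (r/3)^9/326592)^3)/2) (((1 + r/3 + (r/3)^2/2 + (r/3)^3/6 + (r/3)^4/24 + (r/3)^5/120 + (r/3)^6/720 + (r/3)^7/5040 + (r/3)^8/40320 + (r/3)^9/326592)^3 + (1 - r/3 + (r/3)^2/2 - (r/3)^3/6 + (r/3)^4/24 - (r/3)^5/120 + (r/3)^6/720 - (r/3)^7/5040 + (r/3)^8/40320 + (r/3)^9/326592)^3)/2) h0.le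
    hs0 hc0 hslo0 hclo0 hs_lo hs_hi hc_lo hc_hi hkey

lemma sinh_ge_sq (r : ℝ) (h3 : 3 ≤ r) : r^2 ≤ Real.sinh r := by
  have h0 : (0:ℝ) ≤ r := by linarith
  have hsum := Real.sum_le_exp_of_nonneg h0 8
  simp [Finset.sum_range_succ, Nat.factorial] at hsum
  norm_num at hsum
  have hneg : Real.exp (-r) ≤ 1 := by
    rw [Real.exp_le_one_iff]; linarith
  rw [Real.sinh_eq]
  nlinarith [hsum, hneg, pow_nonneg (by linarith : (0:ℝ) ≤ r - 3) 2,
    pow_nonneg (by linarith : (0:ℝ) ≤ r - 3) 3,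
    pow_nonneg (by linarith : (0:ℝ) ≤ r - 3) 4,
    pow_nonneg (by linarith : (0:ℝ) ≤ r - 3) 5,
    pow_nonneg (by linarith : (0:ℝ) ≤ r - 3) 6,
    pow_nonneg (by linarith : (0:ℝ) ≤ r - 3) 7]

lemma large_case (r : ℝ) (h3 : 3 ≤ r) :
    4 * (Real.sinh r) ^ 4 + 2 * r ^ 4 * (Real.cosh r) ^ 2 + r ^ 4
      - 3 * r * Real.cosh r * (Real.sinh r) ^ 3 - 3 * r ^ 2 * (Real.sinh r) ^ 2
      - r ^ 3 * Real.sinh r * Real.cosh r ≤ 0 := by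
  have h0 : (0:ℝ) < r := by linarith
  set s := Real.sinh r with hs
  set c := Real.cosh r with hc
  have hr2s : r^2 ≤ s := sinh_ge_sq r h3
  have hs9 : (9:ℝ) ≤ s := by nlinarith
  have hs0 : (0:ℝ) < s := by linarith
  have hc0 : (0:ℝ) < c := Real.cosh_pos r
  have hsc : s ≤ c := by
    have h1 : c - s = Real.exp (-r) := by
      rw [hs, hc, Real.sinh_eq, Real.cosh_eq]; ring
    have := Real.exp_pos (-r)
    linarith
  have hcs : c ≤ s + 1 := by
    have h1 : c - s = Real.exp (-r) := by
      rw [hs, hc, Real.sinh_eq, Real.cosh_eq]; ring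
    have h2 : Real.exp (-r) ≤ 1 := by rw [Real.exp_le_one_iff]; linarith
    linarith
  have hr4 : r^4 ≤ s^2 := by nlinarith
  have hc2 : c^2 ≤ (100/81) * s^2 := by nlinarith
  have hB : 2 * r^4 * c^2 ≤ (200/81) * s^4 := by nlinarith [mul_le_mul hr4 hc2 (sq_nonneg c) (sq_nonneg s)]
  have h81 : (0:ℝ) ≤ s^2 - 81 := by nlinarith
  have hC : r^4 ≤ (1/81) * s^4 := by nlinarith [mul_nonneg (sq_nonneg s) h81]
  have hcs3 : s^4 ≤ c * s^3 := by nlinarith [pow_pos hs0 3]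
  have hA : 9 * s^4 ≤ 3 * r * (c * s^3) := by
    have h1 : 9 * (c * s^3) ≤ (3*r) * (c * s^3) := by
      have hpos : (0:ℝ) ≤ c * s^3 := by positivity
      have : (9:ℝ) ≤ 3*r := by linarith
      exact mul_le_mul_of_nonneg_right this hpos
    nlinarith
  have hn1 : (0:ℝ) ≤ 3 * r^2 * s^2 := by positivity
  have hn2 : (0:ℝ) ≤ r^3 * (s * c) := by positivity
  have hs4 : (0:ℝ) ≤ s^4 := by positivity
  nlinarith [hA, hB, hC, hn1, hn2, hs4]

theorem stmt_3 (r : ℝ) (hr : 0 < r) :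
    4 * (Real.sinh r) ^ 4 + 2 * r ^ 4 * (Real.cosh r) ^ 2 + r ^ 4
      - 3 * r * Real.cosh r * (Real.sinh r) ^ 3 - 3 * r ^ 2 * (Real.sinh r) ^ 2
      - r ^ 3 * Real.sinh r * Real.cosh r ≤ 0 := by
  rcases le_or_gt r 3 with h | h
  · exact small_case r hr h
  · exact large_case r h.le
end

section
/- Let Z(r) = coth r − 1/r for r > 0. Then for all r > 0, r² Z''(r) + r Z'(r) − Z(r) ≤ 0. -/
noncomputable def Z : ℝ → ℝ := fun r => Real.cosh r / Real.sinh r - 1 / r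

/-!
Write `c = cosh r`, `s = sinh r`. Up to the positive factor `s ^ 3`, the expression is
`2 r ^ 2 c - r s - c s ^ 2`. Two elementary estimates on `[0, ∞)` suffice: the Taylor bound
`s ≥ r + r ^ 3 / 6` (from the power series of `sinh`, all of whose terms are nonnegative), and
`r c - s ≤ r ^ 3 c / 3`, i.e. `tanh r ≥ r - r ^ 3 / 3` (by monotonicity, as the difference has a
nonnegative derivative). Substituting them leaves `-r ^ 6 c / 36 ≤ 0`.
-/

open Real Set Topology

lemma monotoneOn_Ici_of_hasDerivAt_nonneg {f f' : ℝ → ℝ} {a : ℝ}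
    (hf : ∀ x, HasDerivAt f (f' x) x) (hf' : ∀ x, a ≤ x → 0 ≤ f' x) :
    MonotoneOn f (Ici a) :=
  monotoneOn_of_hasDerivWithinAt_nonneg (convex_Ici a)
    (fun x _ ↦ (hf x).continuousAt.continuousWithinAt)
    (fun x _ ↦ (hf x).hasDerivWithinAt)
    (fun x hx ↦ hf' x (by rw [interior_Ici] at hx; exact hx.le))

namespace Real

lemma add_pow_three_div_six_le_sinh {x : ℝ} (hx : 0 ≤ x) : x + x ^ 3 / 6 ≤ sinh x := by
  have h := sum_le_hasSum (Finset.range 2) (fun n _ ↦ by positivity) (hasSum_sinh x)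
  norm_num [Finset.sum_range_succ, Nat.factorial] at h
  linarith

lemma sinh_le_mul_cosh {x : ℝ} (hx : 0 ≤ x) : sinh x ≤ x * cosh x := by
  have hderiv (y : ℝ) : HasDerivAt (fun y ↦ y * cosh y - sinh y) (y * sinh y) y := by
    refine (((hasDerivAt_id y).mul (hasDerivAt_cosh y)).sub (hasDerivAt_sinh y)).congr_deriv ?_
    simp only [id_eq]
    ring
  have := monotoneOn_Ici_of_hasDerivAt_nonneg hderiv
    (fun y hy ↦ mul_nonneg hy (sinh_nonneg_iff.mpr hy)) self_mem_Ici hx hx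
  simp only [zero_mul, sinh_zero, sub_zero] at this
  linarith

lemma mul_cosh_sub_sinh_le {x : ℝ} (hx : 0 ≤ x) : x * cosh x - sinh x ≤ x ^ 3 * cosh x / 3 := by
  have hderiv (y : ℝ) : HasDerivAt (fun y ↦ y ^ 3 * cosh y / 3 - (y * cosh y - sinh y))
      (y * (y * cosh y - sinh y) + y ^ 3 * sinh y / 3) y := by
    refine ((((hasDerivAt_pow 3 y).mul (hasDerivAt_cosh y)).div_const 3).sub
      (((hasDerivAt_id y).mul (hasDerivAt_cosh y)).sub (hasDerivAt_sinh y))).congr_deriv ?_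
    simp only [id_eq]
    ring
  have := monotoneOn_Ici_of_hasDerivAt_nonneg hderiv (fun y hy ↦ by
      have := sub_nonneg.mpr (sinh_le_mul_cosh hy)
      have := sinh_nonneg_iff.mpr hy
      positivity) self_mem_Ici hx hx
  simp only [ne_eq, OfNat.ofNat_ne_zero, not_false_eq_true, zero_pow, zero_mul, zero_div,
    sinh_zero, sub_self] at this
  linarith

lemma two_mul_sq_mul_cosh_le (x : ℝ) : 2 * x ^ 2 * cosh x ≤ x * sinh x + cosh x * sinh x ^ 2 := by
  wlog hx : 0 ≤ x generalizing x
  · simpa using this (-x) (by linarith)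
  have hsinh : cosh x * (x + x ^ 3 / 6) ^ 2 ≤ cosh x * sinh x ^ 2 := by
    have := add_pow_three_div_six_le_sinh hx
    gcongr
  have hcosh : x * (x * cosh x - sinh x) ≤ x * (x ^ 3 * cosh x / 3) := by
    have := mul_cosh_sub_sinh_le hx
    gcongr
  -- The two bounds leave exactly the slack `x ^ 6 * cosh x / 36`.
  linarith [mul_nonneg (cosh_pos x).le (pow_nonneg hx 6)]

end Real

lemma hasDerivAt_Z {x : ℝ} (hx : x ≠ 0) : HasDerivAt Z (1 / x ^ 2 - 1 / sinh x ^ 2) x := by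
  have hs : sinh x ≠ 0 := sinh_ne_zero.mpr hx
  have hinv : HasDerivAt (fun y : ℝ ↦ 1 / y) (-(x ^ 2)⁻¹) x := by
    simpa only [one_div] using hasDerivAt_inv hx
  refine (((hasDerivAt_cosh x).div (hasDerivAt_sinh x) hs).sub hinv).congr_deriv ?_
  field_simp
  linear_combination (-x ^ 2) * cosh_sq_sub_sinh_sq x

lemma deriv_Z_eventuallyEq {x : ℝ} (hx : x ≠ 0) :
    deriv Z =ᶠ[𝓝 x] fun y ↦ 1 / y ^ 2 - 1 / sinh y ^ 2 := by
  filter_upwards [isOpen_ne.mem_nhds hx] with y hy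
  exact (hasDerivAt_Z hy).deriv

lemma hasDerivAt_deriv_Z {x : ℝ} (hx : x ≠ 0) :
    HasDerivAt (deriv Z) (2 * cosh x / sinh x ^ 3 - 2 / x ^ 3) x := by
  have hs : sinh x ≠ 0 := sinh_ne_zero.mpr hx
  refine HasDerivAt.congr_of_eventuallyEq ?_ (deriv_Z_eventuallyEq hx)
  simp only [one_div]
  refine (((hasDerivAt_pow 2 x).fun_inv (pow_ne_zero 2 hx)).sub
    (((hasDerivAt_sinh x).fun_pow 2).fun_inv (pow_ne_zero 2 hs))).congr_deriv ?_
  field_simp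
  ring

lemma sq_mul_deriv_deriv_Z_add_mul_deriv_Z_sub_Z {x : ℝ} (hx : x ≠ 0) :
    x ^ 2 * deriv (deriv Z) x + x * deriv Z x - Z x =
      (2 * x ^ 2 * cosh x - x * sinh x - cosh x * sinh x ^ 2) / sinh x ^ 3 := by
  have hs : sinh x ≠ 0 := sinh_ne_zero.mpr hx
  rw [(hasDerivAt_deriv_Z hx).deriv, (hasDerivAt_Z hx).deriv, Z]
  field_simp
  ring

theorem stmt_4 (r : ℝ) (hr : 0 < r) :
    r ^ 2 * deriv (deriv Z) r + r * deriv Z r - Z r ≤ 0 := by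
  rw [sq_mul_deriv_deriv_Z_add_mul_deriv_Z_sub_Z hr.ne']
  apply div_nonpos_of_nonpos_of_nonneg
  · linarith [two_mul_sq_mul_cosh_le r]
  · exact pow_nonneg (sinh_nonneg_iff.mpr hr.le) 3
end
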